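/- Let U ∈ ℝ^{p×r} and V ∈ ℝ^{n×r} each have orthonormal columns, with incoherence bounds ‖Uᵀ e_a‖_2^2 ≤ μr/p and ‖Vᵀ e_b‖_2^2 ≤ μr/n for all a, b. Then for any standard basis matrix e_a e_bᵀ, the projection P_T(e_a e_bᵀ) = U Uᵀ e_a e_bᵀ + e_a e_bᵀ V Vᵀ − U Uᵀ e_a e_bᵀ V Vᵀ satisfies ‖P_T(e_a e_bᵀ)‖_F^2 ≤ μr(n+p)/(pn). -/

import Mathlib

/-!
With `P = U Uᵀ` and `Q = V Vᵀ`, the entries of `P_T(e_a e_bᵀ)` are `f i y j + x i g j - f i g j`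
where `x = e_a`, `y = e_b`, `f = P e_a`, `g = Q e_b`. Because `P` and `Q` are symmetric
idempotents, `‖f‖² = ⟪e_a, f⟫ = P a a = ‖Uᵀ e_a‖²`, and likewise for `g`; expanding the square
then gives `‖P_T(e_a e_bᵀ)‖_F² = A + B - A B` with `A = ‖Uᵀ e_a‖²`, `B = ‖Vᵀ e_b‖²`.
Dropping `A B ≥ 0` and applying the incoherence bounds gives the claim.
-/

open Matrix

variable {m n r R : Type*} [CommRing R]

section MatrixUnit

variable [DecidableEq m] [DecidableEq n]

lemma mul_single_one_apply [Fintype m] (M : Matrix m m R) (a i : m) (b j : n) :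
    (M * single a b (1 : R)) i j = M i a * (Pi.single b 1 : n → R) j := by
  by_cases hj : j = b
  · subst hj; simp
  · simp [mul_single_apply_of_ne _ _ _ _ _ hj, hj]

lemma single_one_mul_apply [Fintype n] (M : Matrix n n R) (a i : m) (b j : n) :
    (single a b (1 : R) * M) i j = (Pi.single a 1 : m → R) i * M b j := by
  by_cases hi : i = a
  · subst hi; simp
  · simp [single_mul_apply_of_ne _ _ _ _ _ hi, hi]

lemma mul_single_one_mul_apply [Fintype m] [Fintype n] (P : Matrix m m R) (Q : Matrix n n R)
    (a i : m) (b j : n) :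
    (P * single a b (1 : R) * Q) i j = P i a * Q b j := by
  rw [mul_apply]
  simp [mul_single_one_apply, Pi.single_apply, ite_mul]

end MatrixUnit

lemma mul_transpose_self_apply_self [Fintype r] (U : Matrix m r R) (a : m) :
    (U * Uᵀ) a a = ∑ k, U a k ^ 2 := by
  simp only [mul_apply, transpose_apply, sq]

lemma sum_sq_mul_transpose_self_apply [Fintype m] [Fintype r] [DecidableEq r]
    (U : Matrix m r R) (hU : Uᵀ * U = 1) (a : m) :
    ∑ i, (U * Uᵀ) i a ^ 2 = (U * Uᵀ) a a := by
  have hidem : (U * Uᵀ)ᵀ * (U * Uᵀ) = U * Uᵀ := by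
    rw [transpose_mul, transpose_transpose, Matrix.mul_assoc, ← Matrix.mul_assoc Uᵀ, hU,
      Matrix.one_mul]
  conv_rhs => rw [← hidem, mul_apply]
  simp only [transpose_apply, sq]

lemma sum_sum_sq_mul_add_mul_sub_mul [Fintype m] [Fintype n] (x f : m → R) (y g : n → R)
    (hf : f ⬝ᵥ f = x ⬝ᵥ f) (hg : g ⬝ᵥ g = y ⬝ᵥ g) :
    ∑ i, ∑ j, (f i * y j + x i * g j - f i * g j) ^ 2
      = (x ⬝ᵥ x) * (y ⬝ᵥ y) - (x ⬝ᵥ x - x ⬝ᵥ f) * (y ⬝ᵥ y - y ⬝ᵥ g) := by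
  have expand : ∀ i j, (f i * y j + x i * g j - f i * g j) ^ 2
      = f i * f i * (y j * y j) + x i * x i * (g j * g j) + f i * f i * (g j * g j)
        + 2 * (x i * f i * (y j * g j)) - 2 * (f i * f i * (y j * g j))
        - 2 * (x i * f i * (g j * g j)) := fun i j => by ring
  simp only [expand, Finset.sum_add_distrib, Finset.sum_sub_distrib, ← Finset.mul_sum,
    ← Finset.sum_mul]
  simp only [dotProduct] at hf hg ⊢
  rw [hf, hg]
  ring

lemma sum_sq_projT_single_eq [Fintype m] [Fintype n] [Fintype r] [DecidableEq m]
    [DecidableEq n] [DecidableEq r] (U : Matrix m r R) (V : Matrix n r R) (hU : Uᵀ * U = 1)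
    (hV : Vᵀ * V = 1) (a : m) (b : n) :
    ∑ i, ∑ j, ((U * Uᵀ * single a b (1 : R) + single a b (1 : R) * (V * Vᵀ)
        - U * Uᵀ * single a b (1 : R) * (V * Vᵀ)) i j) ^ 2
      = (∑ k, U a k ^ 2) + (∑ k, V b k ^ 2) - (∑ k, U a k ^ 2) * (∑ k, V b k ^ 2) := by
  have hf : (fun i => (U * Uᵀ) i a) ⬝ᵥ (fun i => (U * Uᵀ) i a)
      = Pi.single a 1 ⬝ᵥ fun i => (U * Uᵀ) i a := by
    rw [single_dotProduct, one_mul, ← sum_sq_mul_transpose_self_apply U hU a]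
    simp only [dotProduct, sq]
  have hQ_symm : ∀ j, (V * Vᵀ) b j = (V * Vᵀ) j b := fun j => by
    simp only [mul_apply, transpose_apply, mul_comm]
  have hg : (fun j => (V * Vᵀ) b j) ⬝ᵥ (fun j => (V * Vᵀ) b j)
      = Pi.single b 1 ⬝ᵥ fun j => (V * Vᵀ) b j := by
    rw [single_dotProduct, one_mul, ← sum_sq_mul_transpose_self_apply V hV b]
    simp only [dotProduct, sq, hQ_symm]
  simp only [Matrix.sub_apply, Matrix.add_apply, mul_single_one_apply, single_one_mul_apply,
    mul_single_one_mul_apply]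
  rw [sum_sum_sq_mul_add_mul_sub_mul _ _ _ _ hf hg]
  simp only [single_dotProduct, Pi.single_eq_same, one_mul, mul_transpose_self_apply_self]
  ring

theorem frobenius_sq_projT_stdBasis_le_general {p n r : ℕ} (μ : ℝ)
    (U : Matrix (Fin p) (Fin r) ℝ) (V : Matrix (Fin n) (Fin r) ℝ)
    (hU : Uᵀ * U = 1) (hV : Vᵀ * V = 1)
    (hUinc : ∀ a : Fin p, (∑ k, (U a k) ^ 2) ≤ μ * r / p)
    (hVinc : ∀ b : Fin n, (∑ k, (V b k) ^ 2) ≤ μ * r / n)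
    (a : Fin p) (b : Fin n) :
    (∑ i, ∑ j,
        ((U * Uᵀ * Matrix.single a b (1 : ℝ) + Matrix.single a b (1 : ℝ) * (V * Vᵀ)
          - U * Uᵀ * Matrix.single a b (1 : ℝ) * (V * Vᵀ)) i j) ^ 2)
      ≤ μ * r * (n + p) / (p * n) := by
  rw [sum_sq_projT_single_eq U V hU hV a b]
  have hA : 0 ≤ ∑ k, U a k ^ 2 := Finset.sum_nonneg fun k _ => sq_nonneg _
  have hB : 0 ≤ ∑ k, V b k ^ 2 := Finset.sum_nonneg fun k _ => sq_nonneg _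
  have hp : (p : ℝ) ≠ 0 := by exact_mod_cast a.pos.ne'
  have hn : (n : ℝ) ≠ 0 := by exact_mod_cast b.pos.ne'
  calc _ ≤ (∑ k, U a k ^ 2) + ∑ k, V b k ^ 2 := sub_le_self _ (mul_nonneg hA hB)
    _ ≤ μ * r / p + μ * r / n := add_le_add (hUinc a) (hVinc b)
    _ = μ * r * (n + p) / (p * n) := by field_simp

/-- Frobenius norm squared of the projection `P_T(e_a e_bᵀ)` is at most `μ r (n+p)/(p n)`. -/
theorem frobenius_sq_projT_stdBasis_le {p n r : ℕ} (μ : ℝ) (hμ : 0 < μ)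
    (U : Matrix (Fin p) (Fin r) ℝ) (V : Matrix (Fin n) (Fin r) ℝ)
    (hU : Uᵀ * U = 1) (hV : Vᵀ * V = 1)
    (hUinc : ∀ a : Fin p, (∑ k, (U a k) ^ 2) ≤ μ * r / p)
    (hVinc : ∀ b : Fin n, (∑ k, (V b k) ^ 2) ≤ μ * r / n)
    (a : Fin p) (b : Fin n) :
    (∑ i, ∑ j,
        ((U * Uᵀ * Matrix.single a b (1 : ℝ) + Matrix.single a b (1 : ℝ) * (V * Vᵀ)
          - U * Uᵀ * Matrix.single a b (1 : ℝ) * (V * Vᵀ)) i j) ^ 2)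
      ≤ μ * r * (n + p) / (p * n) :=
  frobenius_sq_projT_stdBasis_le_general μ U V hU hV hUinc hVinc a b
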